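/- For all integers i ≥ 2 and real ε' with 0 ≤ ε' ≤ 1/i: if a cheating coalition faces one honest player A_i whose winning probability is at least 1/i − ε' at entry and at least j/(j+1) − ε' at each subsequent round j+1 (for j = i,...,n−1), then the coalition's probability of electing one of its members is at most 1 − 1/n + n·ε'. -/

import Mathlib

/-!
Honest play of `A_i` guarantees the factors `1/i` and `j/(j+1)`, whose product telescopes to
`1/n`. Each of the `n - i + 1` factors may be lowered by `ε'`; as all factors lie in `[0, 1]`,
every such perturbation costs at most `ε'` of the product, so `A_i` still wins with probability
at least `1/n - n ε'`.
-/

open Finset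

lemma mul_sub_le_of_sub_le {a b p q m ε : ℝ} (hε : 0 ≤ ε) (hm : 0 ≤ m) (haε : ε ≤ a)
    (ha : a ≤ 1) (hab : a - ε ≤ b) (hp : p ≤ 1) (hq : 0 ≤ q) (hpq : p - m * ε ≤ q) :
    a * p - (m + 1) * ε ≤ b * q :=
  calc a * p - (m + 1) * ε
      ≤ (a - ε) * (p - m * ε) := by nlinarith [mul_nonneg hm hε]
    _ ≤ (a - ε) * q := by gcongr
    _ ≤ b * q := by gcongr

lemma Finset.prod_sub_card_mul_le_prod {ι : Type*} (s : Finset ι) {a b : ι → ℝ} {ε : ℝ}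
    (hε : 0 ≤ ε) (haε : ∀ k ∈ s, ε ≤ a k) (ha : ∀ k ∈ s, a k ≤ 1)
    (hab : ∀ k ∈ s, a k - ε ≤ b k) :
    ∏ k ∈ s, a k - #s * ε ≤ ∏ k ∈ s, b k := by
  induction s using Finset.cons_induction with
  | empty => simp
  | cons k s hk ih =>
    simp only [forall_mem_cons] at haε ha hab
    rw [prod_cons, prod_cons, card_cons, Nat.cast_succ]
    refine mul_sub_le_of_sub_le hε (Nat.cast_nonneg _) haε.1 ha.1 hab.1 ?_ ?_
      (ih haε.2 ha.2 hab.2)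
    · exact prod_le_one (fun j hj ↦ hε.trans (haε.2 j hj)) ha.2
    · exact prod_nonneg fun j hj ↦ by linarith [haε.2 j hj, hab.2 j hj]

lemma prod_Ico_div_add_one {i n : ℕ} (hi : 0 < i) (hin : i ≤ n) :
    ∏ j ∈ Ico i n, ((j : ℝ) / (j + 1)) = i / n := by
  induction n, hin using Nat.le_induction with
  | base => rw [Ico_self, prod_empty, div_self (by positivity)]
  | succ n hin ih =>
    have hn : (n : ℝ) ≠ 0 := Nat.cast_ne_zero.mpr (hi.trans_le hin).ne'
    rw [prod_Ico_succ_top hin, ih, Nat.cast_succ]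
    field_simp

lemma one_div_le_div_add_one {i j : ℕ} (hi : 2 ≤ i) (hij : i ≤ j) :
    1 / (i : ℝ) ≤ j / (j + 1) := by
  have hi' : (2 : ℝ) ≤ i := by exact_mod_cast hi
  have hij' : (i : ℝ) ≤ j := by exact_mod_cast hij
  rw [div_le_div_iff₀ (by linarith) (by linarith)]
  nlinarith

theorem coalition_bound_general (n i : ℕ) (hi : 2 ≤ i) (hin : i ≤ n)
    (ε' : ℝ) (hε0 : 0 ≤ ε') (hε1 : ε' ≤ 1 / (i : ℝ))
    (q : ℕ → ℝ)
    (hqi : q i ≥ 1 / (i : ℝ) - ε')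
    (hqj : ∀ j ∈ Finset.Ico i n, q (j + 1) ≥ (j : ℝ) / ((j : ℝ) + 1) - ε')
    (w : ℝ) (hw : w = 1 - q i * ∏ j ∈ Finset.Ico i n, q (j + 1)) :
    w ≤ 1 - 1 / (n : ℝ) + (n : ℝ) * ε' := by
  have hi2 : (2 : ℝ) ≤ i := by exact_mod_cast hi
  have hεj : ∀ j ∈ Ico i n, ε' ≤ (j : ℝ) / (j + 1) :=
    fun j hj ↦ hε1.trans (one_div_le_div_add_one hi (mem_Ico.mp hj).1)
  have htail : (i : ℝ) / n - (n - i : ℕ) * ε' ≤ ∏ j ∈ Ico i n, q (j + 1) := by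
    simpa [prod_Ico_div_add_one (by omega) hin] using
      prod_sub_card_mul_le_prod (Ico i n) hε0 hεj
        (fun j _ ↦ div_le_one_of_le₀ (by linarith) (by positivity)) (fun j hj ↦ hqj j hj)
  have hall := mul_sub_le_of_sub_le hε0 (Nat.cast_nonneg _) hε1
    (div_le_one_of_le₀ (by linarith) (by linarith)) hqi
    (div_le_one_of_le₀ (by exact_mod_cast hin) (by positivity))
    (prod_nonneg fun j hj ↦ by linarith [hεj j hj, hqj j hj]) htail
  have hcount : ((n - i : ℕ) + 1 : ℝ) ≤ n := by
    rw [Nat.cast_sub hin]; linarith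
  have hfirst : 1 / (i : ℝ) * (i / n) = 1 / n := by field_simp
  rw [hw]
  linarith [mul_le_mul_of_nonneg_right hcount hε0]

theorem coalition_bound (n i : ℕ) (hi : 2 ≤ i) (hin : i ≤ n)
    (ε' : ℝ) (hε0 : 0 ≤ ε') (hε1 : ε' ≤ 1 / (i : ℝ))
    (q : ℕ → ℝ) (hq0 : ∀ j, 0 ≤ q j)
    (hqi : q i ≥ 1 / (i : ℝ) - ε')
    (hqj : ∀ j ∈ Finset.Ico i n, q (j + 1) ≥ (j : ℝ) / ((j : ℝ) + 1) - ε')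
    (w : ℝ) (hw : w = 1 - q i * ∏ j ∈ Finset.Ico i n, q (j + 1)) :
    w ≤ 1 - 1 / (n : ℝ) + (n : ℝ) * ε' :=
  coalition_bound_general n i hi hin ε' hε0 hε1 q hqi hqj w hw
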